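/- arXiv:2605.12826 — 3 statements merged into one kernel-verified Lean document; each statement's English description precedes it below -/
import Mathlib

section
/- Let ρ be a probability measure on a measurable space 𝒳 of contexts. Suppose r : 𝒳 → ℝ and g : 𝒳 → ℝ are measurable functions, ε ≥ 0, and pointwise for ρ-almost every x one has 0 ≤ r(x) ≤ 2ε and r(x) = 0 whenever g(x) > 2ε. Suppose there exist constants c₀ > 0 and α > 0 such that ρ{x : g(x) ≤ t} ≤ c₀·t^α for all t ∈ [0,1], and that 2ε ≤ 1. Then the expected regret satisfies ∫ r dρ ≤ 2^{α+1}·c₀·ε^{α+1}. -/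
/-!
The regret vanishes off the small-gap set `S = {g ≤ 2ε}` and is at most `2ε` on it, so
`∫ r ≤ 2ε · ρ(S)`; the margin condition at `t = 2ε` gives `ρ(S) ≤ c₀ (2ε)^α`.
-/

open MeasureTheory

lemma Real.rpow_mul_self_le_rpow_add_one {x : ℝ} (hx : 0 ≤ x) (y : ℝ) :
    x ^ y * x ≤ x ^ (y + 1) := by
  simpa only [Real.rpow_one] using Real.le_rpow_add hx y 1

lemma MeasureTheory.integral_le_mul_measureReal_of_ae_le_indicator {X : Type*}
    [MeasurableSpace X] {μ : Measure X} [IsFiniteMeasure μ] {f : X → ℝ} {s : Set X}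
    (hs : MeasurableSet s) {M : ℝ} (hf_nonneg : 0 ≤ᵐ[μ] f)
    (hf_le : ∀ᵐ x ∂μ, f x ≤ s.indicator (fun _ ↦ M) x) :
    ∫ x, f x ∂μ ≤ M * μ.real s := by
  calc ∫ x, f x ∂μ ≤ ∫ x, s.indicator (fun _ ↦ M) x ∂μ :=
        integral_mono_of_nonneg hf_nonneg ((integrable_const M).indicator hs) hf_le
    _ = M * μ.real s := by rw [integral_indicator_const M hs, smul_eq_mul, mul_comm]

theorem stmt_3_general {𝒳 : Type*} [MeasurableSpace 𝒳] (ρ : Measure 𝒳) [IsProbabilityMeasure ρ]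
    (r g : 𝒳 → ℝ) (hgm : Measurable g)
    (ε : ℝ) (hε : 0 ≤ ε) (hε1 : 2 * ε ≤ 1)
    (hpoint : ∀ᵐ x ∂ρ, 0 ≤ r x ∧ r x ≤ 2 * ε ∧ (2 * ε < g x → r x = 0))
    (c₀ α : ℝ) (hc₀ : 0 < c₀)
    (htsy : ∀ t ∈ Set.Icc (0:ℝ) 1, ρ {x | g x ≤ t} ≤ ENNReal.ofReal (c₀ * t ^ α)) :
    ∫ x, r x ∂ρ ≤ 2 ^ (α + 1) * c₀ * ε ^ (α + 1) := by
  set S : Set 𝒳 := {x | g x ≤ 2 * ε}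
  have h2ε : 0 ≤ 2 * ε := by positivity
  have hS : MeasurableSet S := measurableSet_le hgm measurable_const
  have hr_le : ∀ᵐ x ∂ρ, r x ≤ S.indicator (fun _ ↦ 2 * ε) x := by
    filter_upwards [hpoint] with x ⟨_, hle, hzero⟩
    by_cases hx : x ∈ S
    · rw [Set.indicator_of_mem hx]; exact hle
    · rw [Set.indicator_of_notMem hx, hzero (not_le.mp hx)]
  have hρS : ρ.real S ≤ c₀ * (2 * ε) ^ α :=
    ENNReal.toReal_le_of_le_ofReal (by positivity) (htsy (2 * ε) ⟨h2ε, hε1⟩)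
  calc ∫ x, r x ∂ρ ≤ 2 * ε * ρ.real S :=
        integral_le_mul_measureReal_of_ae_le_indicator hS (hpoint.mono fun _ h ↦ h.1) hr_le
    _ ≤ 2 * ε * (c₀ * (2 * ε) ^ α) := by gcongr
    _ = c₀ * ((2 * ε) ^ α * (2 * ε)) := by ring
    _ ≤ c₀ * (2 * ε) ^ (α + 1) := by gcongr; exact Real.rpow_mul_self_le_rpow_add_one h2ε α
    _ = 2 ^ (α + 1) * c₀ * ε ^ (α + 1) := by rw [Real.mul_rpow zero_le_two hε]; ring

/-- Lemma 4 (expected regret bound under the Tsybakov/no-tie condition):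
if ρ-a.e. `0 ≤ r ≤ 2ε` and `r = 0` whenever `g > 2ε`, and
`ρ{g ≤ t} ≤ c₀ t^α` for all `t ∈ [0,1]`, with `2ε ≤ 1`, then
`∫ r dρ ≤ 2^{α+1} c₀ ε^{α+1}`. -/
theorem stmt_3 {𝒳 : Type*} [MeasurableSpace 𝒳] (ρ : Measure 𝒳) [IsProbabilityMeasure ρ]
    (r g : 𝒳 → ℝ) (hr : Measurable r) (hgm : Measurable g)
    (ε : ℝ) (hε : 0 ≤ ε) (hε1 : 2 * ε ≤ 1)
    (hpoint : ∀ᵐ x ∂ρ, 0 ≤ r x ∧ r x ≤ 2 * ε ∧ (2 * ε < g x → r x = 0))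
    (c₀ α : ℝ) (hc₀ : 0 < c₀) (hα : 0 < α)
    (htsy : ∀ t ∈ Set.Icc (0:ℝ) 1, ρ {x | g x ≤ t} ≤ ENNReal.ofReal (c₀ * t ^ α)) :
    ∫ x, r x ∂ρ ≤ 2 ^ (α + 1) * c₀ * ε ^ (α + 1) :=
  stmt_3_general ρ r g hgm ε hε hε1 hpoint c₀ α hc₀ htsy
end

section
/- Let ρ be a probability measure on a measurable space 𝒳, let 𝒫 be a type of paths with a distinguished path P_avg, let C : 𝒳 → Finset 𝒫 assign to each context a finite candidate set containing at least two elements and containing P_avg, and let μ : 𝒫 × 𝒳 → ℝ with 0 ≤ μ(P,x) ≤ 1. Let f : 𝒫 × 𝒳 → ℝ and ε ≥ 0 satisfy |f(P,x) − μ(P,x)| ≤ ε for all x and all P ∈ C(x), with 2ε ≤ 1. For each x, let P̂(x) ∈ C(x) maximize f(·,x) over C(x), and let g(x) be the difference between the largest and second-largest (with multiplicity) values of {μ(P,x) : P ∈ C(x)}. Assume: (i) x ↦ μ(P̂(x),x), x ↦ max_{P∈C(x)} μ(P,x), and g are measurable, and for all t ∈ [0,1], ρ{x : g(x) ≤ t}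 ≤ c₀·t^α for constants c₀ > 0, α > 0; (ii) there exist a measurable set 𝒮 with ρ(𝒮) ≥ p, p ∈ (0,1], and γ > 0 such that max_{P∈C(x)} μ(P,x) ≥ μ(P_avg,x) + γ for all x ∈ 𝒮; and (iii) ε < (p·γ / (2^{α+1}·c₀))^{1/(α+1)}. Then ∫ μ(P̂(x),x) dρ(x) > ∫ μ(P_avg,x) dρ(x). -/
open MeasureTheory

/-- `IsTopTwoGap S v g` says `g` is the difference between the largest and
second-largest (counted with multiplicity) values of `v` on the finite set `S`:
there is a maximizer `P₁` of `v` on `S`, `S.erase P₁` is nonempty, and `g` is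
the difference between `v P₁` and the maximum of `v` over `S.erase P₁`. -/
def IsTopTwoGap {Path : Type*} [DecidableEq Path] (S : Finset Path) (v : Path → ℝ) (g : ℝ) : Prop :=
  ∃ P₁ ∈ S, (∀ Q ∈ S, v Q ≤ v P₁) ∧
    ∃ h : (S.erase P₁).Nonempty, g = v P₁ - (S.erase P₁).sup' h v

/-- Theorem 1 (strict improvement over uniform-all fusion): under the uniform
score-accuracy bound `ε` with `2ε ≤ 1`, the Tsybakov/no-tie condition
`ρ{g ≤ t} ≤ c₀ t^α` on the candidate-set gap `g`, suboptimality of the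
uniform-all baseline `Pavg` by margin `γ` on a set of measure at least `p`,
and `ε < (pγ / (2^{α+1} c₀))^{1/(α+1)}`, the learned selection rule `Phat`
strictly improves over `Pavg` in expected performance. -/
theorem stmt_6 {𝒳 : Type*} [MeasurableSpace 𝒳] (ρ : Measure 𝒳) [IsProbabilityMeasure ρ]
    {Path : Type*} [DecidableEq Path] (Pavg : Path) (C : 𝒳 → Finset Path)
    (hcard : ∀ x, 2 ≤ (C x).card) (havg : ∀ x, Pavg ∈ C x)
    (μ f : Path → 𝒳 → ℝ) (hμ : ∀ P x, 0 ≤ μ P x ∧ μ P x ≤ 1)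
    (ε : ℝ) (hε : 0 ≤ ε) (hε1 : 2 * ε ≤ 1)
    (herr : ∀ x, ∀ P ∈ C x, |f P x - μ P x| ≤ ε)
    (Phat : 𝒳 → Path) (hPhatMem : ∀ x, Phat x ∈ C x)
    (hPhatMax : ∀ x, ∀ Q ∈ C x, f Q x ≤ f (Phat x) x)
    (M g : 𝒳 → ℝ)
    (hM : ∀ x, M x = (C x).sup'
      (Finset.card_pos.mp (by have := hcard x; omega)) (fun P => μ P x))
    (hg : ∀ x, IsTopTwoGap (C x) (fun P => μ P x) (g x))
    (hmPhat : Measurable fun x => μ (Phat x) x)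
    (hmM : Measurable M) (hmg : Measurable g)
    (c₀ α : ℝ) (hc₀ : 0 < c₀) (hα : 0 < α)
    (htsy : ∀ t ∈ Set.Icc (0:ℝ) 1, ρ {x | g x ≤ t} ≤ ENNReal.ofReal (c₀ * t ^ α))
    (S : Set 𝒳) (hS : MeasurableSet S)
    (p γ : ℝ) (hp : 0 < p) (hp1 : p ≤ 1) (hγ : 0 < γ)
    (hρS : ENNReal.ofReal p ≤ ρ S)
    (hmargin : ∀ x ∈ S, μ Pavg x + γ ≤ M x)
    (hcond : ε < (p * γ / (2 ^ (α + 1) * c₀)) ^ (1 / (α + 1))) :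
    ∫ x, μ Pavg x ∂ρ < ∫ x, μ (Phat x) x ∂ρ := by
  -- M is an upper bound for μ on the candidate set
  have hMub : ∀ x, ∀ Q ∈ C x, μ Q x ≤ M x := by
    intro x Q hQ
    rw [hM x]
    exact Finset.le_sup' (fun P => μ P x) hQ
  have hM1 : ∀ x, M x ≤ 1 := by
    intro x; rw [hM x]
    exact Finset.sup'_le _ _ fun Q _ => (hμ Q x).2
  have hM0 : ∀ x, 0 ≤ M x := fun x => le_trans (hμ Pavg x).1 (hMub x Pavg (havg x))
  -- step 1: the learned rule is 2ε-optimal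
  have step1 : ∀ x, M x - 2 * ε ≤ μ (Phat x) x := by
    intro x
    obtain ⟨P₁, hP₁mem, hP₁max, _⟩ := hg x
    have hMx : M x = μ P₁ x := by
      rw [hM x]
      exact le_antisymm (Finset.sup'_le _ _ hP₁max) (Finset.le_sup' (fun P => μ P x) hP₁mem)
    have h1 : f P₁ x ≤ f (Phat x) x := hPhatMax x P₁ hP₁mem
    have h2 := abs_le.mp (herr x P₁ hP₁mem)
    have h3 := abs_le.mp (herr x (Phat x) (hPhatMem x))
    rw [hMx]; linarith
  -- step 2: when the gap exceeds 2ε, the learned rule is exactly optimal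
  have step2 : ∀ x, 2 * ε < g x → μ (Phat x) x = M x := by
    intro x hgx
    obtain ⟨P₁, hP₁mem, hP₁max, hne, hgeq⟩ := hg x
    have hMx : M x = μ P₁ x := by
      rw [hM x]
      exact le_antisymm (Finset.sup'_le _ _ hP₁max) (Finset.le_sup' (fun P => μ P x) hP₁mem)
    by_cases hPe : Phat x = P₁
    · rw [hPe, hMx]
    · exfalso
      have hmem : Phat x ∈ (C x).erase P₁ := Finset.mem_erase.mpr ⟨hPe, hPhatMem x⟩
      have h1 : μ (Phat x) x ≤ ((C x).erase P₁).sup' hne (fun P => μ P x) :=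
        Finset.le_sup' (fun P => μ P x) hmem
      have h2 := step1 x
      simp only at hgeq
      linarith
  -- integrability
  have bnd : ∀ (u : 𝒳 → ℝ), Measurable u → (∀ x, 0 ≤ u x) → (∀ x, u x ≤ 1) →
      Integrable u ρ := by
    intro u hu h0 h1
    refine (integrable_const (1:ℝ)).mono' hu.aestronglyMeasurable ?_
    filter_upwards with x
    rw [Real.norm_eq_abs, abs_le]
    exact ⟨by linarith [h0 x], h1 x⟩
  have intPhat : Integrable (fun x => μ (Phat x) x) ρ :=
    bnd _ hmPhat (fun x => (hμ _ _).1) (fun x => (hμ _ _).2)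
  have intM : Integrable M ρ := bnd M hmM hM0 hM1
  -- the bad set where the gap is small
  set A : Set 𝒳 := {x | g x ≤ 2 * ε} with hA_def
  have hA : MeasurableSet A := hmg measurableSet_Iic
  have hDle : ∀ x, M x - μ (Phat x) x ≤ A.indicator (fun _ => 2 * ε) x := by
    intro x
    by_cases hx : x ∈ A
    · rw [Set.indicator_of_mem hx]; linarith [step1 x]
    · rw [Set.indicator_of_notMem hx]
      have h2 : 2 * ε < g x := not_le.mp hx
      rw [step2 x h2]; linarith
  have intInd : Integrable (A.indicator fun _ => (2 * ε : ℝ)) ρ :=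
    (integrable_const _).indicator hA
  have hρA : (ρ A).toReal ≤ c₀ * (2 * ε) ^ α := by
    have h1 : ρ A ≤ ENNReal.ofReal (c₀ * (2 * ε) ^ α) :=
      htsy (2 * ε) ⟨by linarith, hε1⟩
    exact ENNReal.toReal_le_of_le_ofReal
      (mul_nonneg hc₀.le (Real.rpow_nonneg (by linarith) α)) h1
  have hbound : ∫ x, M x ∂ρ - ∫ x, μ (Phat x) x ∂ρ ≤ 2 * ε * (c₀ * (2 * ε) ^ α) := by
    have h1 : ∫ x, (M x - μ (Phat x) x) ∂ρ ≤ ∫ x, A.indicator (fun _ => 2 * ε) x ∂ρ :=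
      integral_mono (intM.sub intPhat) intInd hDle
    have h2 : ∫ x, A.indicator (fun _ => (2 * ε : ℝ)) x ∂ρ = (ρ A).toReal • (2 * ε) :=
      integral_indicator_const _ hA
    rw [integral_sub intM intPhat] at h1
    rw [h2, smul_eq_mul] at h1
    have h3 : (ρ A).toReal * (2 * ε) ≤ c₀ * (2 * ε) ^ α * (2 * ε) :=
      mul_le_mul_of_nonneg_right hρA (by linarith)
    linarith
  -- the margin step
  have hpS : p ≤ (ρ S).toReal :=
    (ENNReal.ofReal_le_iff_le_toReal (measure_ne_top ρ S)).mp hρS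
  have intIndγ : Integrable (S.indicator fun _ => γ) ρ := (integrable_const _).indicator hS
  have hindγ : ∫ x, S.indicator (fun _ => γ) x ∂ρ = (ρ S).toReal • γ :=
    integral_indicator_const _ hS
  have hpγind : p * γ ≤ ∫ x, S.indicator (fun _ => γ) x ∂ρ := by
    rw [hindγ, smul_eq_mul]
    calc p * γ ≤ (ρ S).toReal * γ := by nlinarith
      _ = (ρ S).toReal * γ := rfl
  have key : ∫ x, μ Pavg x ∂ρ + p * γ ≤ ∫ x, M x ∂ρ := by
    by_cases hint : Integrable (fun x => μ Pavg x) ρ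
    · have h1 : ∫ x, S.indicator (fun _ => γ) x ∂ρ ≤ ∫ x, (M x - μ Pavg x) ∂ρ := by
        apply integral_mono intIndγ (intM.sub hint)
        intro x
        simp only [Pi.sub_apply]
        by_cases hx : x ∈ S
        · rw [Set.indicator_of_mem hx]
          have := hmargin x hx; linarith
        · rw [Set.indicator_of_notMem hx]
          have := hMub x Pavg (havg x); linarith
      rw [integral_sub intM hint] at h1
      linarith
    · rw [integral_undef hint]
      have h1 : ∫ x, S.indicator (fun _ => γ) x ∂ρ ≤ ∫ x, M x ∂ρ := by
        apply integral_mono intIndγ intM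
        intro x
        by_cases hx : x ∈ S
        · rw [Set.indicator_of_mem hx]
          have h2 := hmargin x hx
          have h3 := (hμ Pavg x).1
          linarith
        · rw [Set.indicator_of_notMem hx]
          exact hM0 x
      linarith
  -- arithmetic: 2ε · c₀ (2ε)^α < pγ
  have hfinal : 2 * ε * (c₀ * (2 * ε) ^ α) < p * γ := by
    rcases eq_or_lt_of_le hε with h0 | hεpos
    · rw [← h0]
      simp only [mul_zero, zero_mul, mul_comm]
      positivity
    · have hD : (0:ℝ) < 2 ^ (α + 1) * c₀ :=
        mul_pos (Real.rpow_pos_of_pos (by norm_num) _) hc₀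
      have hr : (0:ℝ) < p * γ / (2 ^ (α + 1) * c₀) := div_pos (mul_pos hp hγ) hD
      have hεa : ε ^ (α + 1) < p * γ / (2 ^ (α + 1) * c₀) := by
        have h1 := Real.rpow_lt_rpow hε hcond (by linarith : (0:ℝ) < α + 1)
        rwa [← Real.rpow_mul hr.le, one_div_mul_cancel (by linarith : α + 1 ≠ 0),
          Real.rpow_one] at h1
      have h2 : ε ^ (α + 1) * (2 ^ (α + 1) * c₀) < p * γ := (lt_div_iff₀ hD).mp hεa
      have h3 : (2 * ε) ^ α = 2 ^ α * ε ^ α :=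
        Real.mul_rpow (by norm_num) hε
      have h4 : (2:ℝ) ^ (α + 1) = 2 ^ α * 2 := by
        rw [Real.rpow_add (by norm_num : (0:ℝ) < 2), Real.rpow_one]
      have h5 : ε ^ (α + 1) = ε ^ α * ε := by
        rw [Real.rpow_add hεpos, Real.rpow_one]
      rw [h4, h5] at h2
      rw [h3]
      nlinarith
  linarith
end

section
/- Let ρ be a probability measure on a measurable space 𝒳, let 𝒫 be a type of paths, let N ≥ 1 and let P⁽¹⁾,…,P⁽ᴺ⁾ ∈ 𝒫 be single-algorithm baseline paths. Let C : 𝒳 → Finset 𝒫 assign to each context a finite candidate set with at least two elements containing all of P⁽¹⁾,…,P⁽ᴺ⁾, and let μ : 𝒫 × 𝒳 → ℝ with 0 ≤ μ(P,x) ≤ 1 and x ↦ μ(P⁽ⁱ⁾,x) measurable for each i. Let f : 𝒫 × 𝒳 → ℝ and ε ≥ 0 satisfy |f(P,x) − μ(P,x)| ≤ ε for all x and all P ∈ C(x), with 2ε ≤ 1. For each x, let P̂(x) ∈ C(x) maximize f(·,x) over C(x), and let g(x) be the difference between the largest and second-largest (with multiplicity) values of {μ(P,x) : P ∈ C(x)}.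 Let i† ∈ {1,…,N} attain the maximum of i ↦ ∫ μ(P⁽ⁱ⁾,x) dρ(x). Assume: (i) x ↦ μ(P̂(x),x), x ↦ max_{P∈C(x)} μ(P,x), and g are measurable, and ρ{x : g(x) ≤ t} ≤ c₀·t^α for all t ∈ [0,1], with c₀ > 0, α > 0; (ii) there exist a measurable set 𝒮 with ρ(𝒮) ≥ p, p ∈ (0,1], and γ > 0 such that max_{P∈C(x)} μ(P,x) ≥ μ(P⁽ⁱ†⁾,x) + γ for all x ∈ 𝒮; and (iii) ε < (p·γ / (2^{α+1}·c₀))^{1/(α+1)}. Then ∫ μ(P̂(x),x) dρ(x) > max over i ∈ {1,…,N} of ∫ μ(P⁽ⁱ⁾,x) dρ(x). -/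
/-!
The learned rule loses at most `2ε` against the best candidate, since its score is within `ε`
of the truth for the selected and the best path alike; and once the gap `g` exceeds `2ε` it
loses nothing, because every path other than the best lies at least `g` below it. The loss is
therefore at most `2ε · ρ{g ≤ 2ε} ≤ 2^{α+1} c₀ ε^{α+1}`, which the condition on `ε` makes
smaller than `pγ`, the least amount by which the best candidate beats the best single
algorithm on average.
-/

open MeasureTheory

namespace Finset

variable {ι : Type*} {S : Finset ι} {v f : ι → ℝ} {ε : ℝ} {i : ι}

theorem sup'_sub_two_mul_le_of_abs_sub_le (hS : S.Nonempty) (hi : i ∈ S)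
    (hmax : ∀ j ∈ S, f j ≤ f i) (herr : ∀ j ∈ S, |f j - v j| ≤ ε) :
    S.sup' hS v - 2 * ε ≤ v i := by
  obtain ⟨j, hj, hsup⟩ := S.exists_mem_eq_sup' hS v
  have hi' := abs_le.mp (herr i hi)
  have hj' := abs_le.mp (herr j hj)
  linarith [hmax j hj]

end Finset

namespace IsTopTwoGap

variable {ι : Type*} [DecidableEq ι] {S : Finset ι} {v f : ι → ℝ} {ε g : ℝ} {i : ι}

theorem eq_sup'_of_sup'_sub_lt (h : IsTopTwoGap S v g) (hS : S.Nonempty) (hi : i ∈ S)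
    (hlt : S.sup' hS v - g < v i) : v i = S.sup' hS v := by
  obtain ⟨P, hP, hmax, hne, rfl⟩ := h
  have hsup : S.sup' hS v = v P := le_antisymm (Finset.sup'_le _ _ hmax) (Finset.le_sup' v hP)
  rw [hsup] at hlt ⊢
  by_contra hvi
  have hiP : i ≠ P := fun hiP => hvi (congrArg v hiP)
  have := Finset.le_sup' v (Finset.mem_erase.mpr ⟨hiP, hi⟩)
  linarith

theorem eq_sup'_of_abs_sub_le (h : IsTopTwoGap S v g) (hgap : 2 * ε < g) (hS : S.Nonempty)
    (hi : i ∈ S) (hmax : ∀ j ∈ S, f j ≤ f i) (herr : ∀ j ∈ S, |f j - v j| ≤ ε) :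
    v i = S.sup' hS v :=
  h.eq_sup'_of_sup'_sub_lt hS hi <| by
    linarith [S.sup'_sub_two_mul_le_of_abs_sub_le hS hi hmax herr]

end IsTopTwoGap

theorem integral_add_indicator_sub_indicator_le {X : Type*} [MeasurableSpace X] {ρ : Measure X}
    [IsFiniteMeasure ρ] {a b : X → ℝ} {S A : Set X} {γ δ : ℝ}
    (ha : Integrable a ρ) (hb : Integrable b ρ) (hS : MeasurableSet S) (hA : MeasurableSet A)
    (h : ∀ x, b x + S.indicator (fun _ => γ) x - A.indicator (fun _ => δ) x ≤ a x) :
    ∫ x, b x ∂ρ + ρ.real S * γ - ρ.real A * δ ≤ ∫ x, a x ∂ρ := by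
  have hSγ := (integrable_const (μ := ρ) γ).indicator hS
  have hAδ := (integrable_const (μ := ρ) δ).indicator hA
  calc ∫ x, b x ∂ρ + ρ.real S * γ - ρ.real A * δ
      = ∫ x, b x + S.indicator (fun _ => γ) x - A.indicator (fun _ => δ) x ∂ρ := by
        rw [integral_sub ?_ hAδ, integral_add hb hSγ, integral_indicator_const _ hS,
          integral_indicator_const _ hA, smul_eq_mul, smul_eq_mul]
        exact hb.add hSγ
    _ ≤ ∫ x, a x ∂ρ := integral_mono ((hb.add hSγ).sub hAδ) ha h

theorem two_mul_mul_mul_rpow_lt {ε c α a : ℝ} (hε : 0 ≤ ε) (hc : 0 < c) (hα : 0 < α + 1)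
    (ha : 0 < a) (hlt : ε < (a / (2 ^ (α + 1) * c)) ^ (1 / (α + 1))) :
    2 * ε * (c * (2 * ε) ^ α) < a := by
  rcases hε.eq_or_lt with rfl | hε0
  · simpa using ha
  have hden : 0 < 2 ^ (α + 1) * c := by positivity
  have hpow : ε ^ (α + 1) < a / (2 ^ (α + 1) * c) := by
    have := Real.rpow_lt_rpow hε hlt hα
    rwa [← Real.rpow_mul (div_pos ha hden).le, one_div_mul_cancel hα.ne', Real.rpow_one] at this
  calc 2 * ε * (c * (2 * ε) ^ α) = 2 ^ (α + 1) * c * ε ^ (α + 1) := by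
        rw [Real.mul_rpow zero_le_two hε, Real.rpow_add_one two_ne_zero,
          Real.rpow_add_one hε0.ne']
        ring
    _ < a := by rwa [lt_div_iff₀ hden, mul_comm] at hpow

/-- Theorem 2 (strict improvement over the best single algorithm): under the
uniform score-accuracy bound `ε` with `2ε ≤ 1`, the Tsybakov/no-tie condition
`ρ{g ≤ t} ≤ c₀ t^α` on the candidate-set gap `g`, suboptimality of the best
single-algorithm baseline `Pb idag` (the maximizer of the expected performance
among `Pb 1, …, Pb N`) by margin `γ` on a set of measure at least `p`, and
`ε < (pγ / (2^{α+1} c₀))^{1/(α+1)}`, the learned selection rule `Phat` strictly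
improves over `max_i ∫ μ(Pb i) dρ` in expected performance. -/
theorem stmt_7 {𝒳 : Type*} [MeasurableSpace 𝒳] (ρ : Measure 𝒳) [IsProbabilityMeasure ρ]
    {Path : Type*} [DecidableEq Path] (N : ℕ) (hN : 1 ≤ N) (Pb : Fin N → Path)
    (C : 𝒳 → Finset Path)
    (hcard : ∀ x, 2 ≤ (C x).card) (hbmem : ∀ x i, Pb i ∈ C x)
    (μ f : Path → 𝒳 → ℝ) (hμ : ∀ P x, 0 ≤ μ P x ∧ μ P x ≤ 1)
    (hmb : ∀ i, Measurable fun x => μ (Pb i) x)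
    (ε : ℝ) (hε : 0 ≤ ε) (hε1 : 2 * ε ≤ 1)
    (herr : ∀ x, ∀ P ∈ C x, |f P x - μ P x| ≤ ε)
    (Phat : 𝒳 → Path) (hPhatMem : ∀ x, Phat x ∈ C x)
    (hPhatMax : ∀ x, ∀ Q ∈ C x, f Q x ≤ f (Phat x) x)
    (M g : 𝒳 → ℝ)
    (hM : ∀ x, M x = (C x).sup'
      (Finset.card_pos.mp (by have := hcard x; omega)) (fun P => μ P x))
    (hg : ∀ x, IsTopTwoGap (C x) (fun P => μ P x) (g x))
    (hmPhat : Measurable fun x => μ (Phat x) x)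
    (hmg : Measurable g)
    (c₀ α : ℝ) (hc₀ : 0 < c₀) (hα : 0 < α)
    (htsy : ∀ t ∈ Set.Icc (0:ℝ) 1, ρ {x | g x ≤ t} ≤ ENNReal.ofReal (c₀ * t ^ α))
    (idag : Fin N)
    (hidag : ∀ i, ∫ x, μ (Pb i) x ∂ρ ≤ ∫ x, μ (Pb idag) x ∂ρ)
    (S : Set 𝒳) (hS : MeasurableSet S)
    (p γ : ℝ) (hp : 0 < p) (hγ : 0 < γ)
    (hρS : ENNReal.ofReal p ≤ ρ S)
    (hmargin : ∀ x ∈ S, μ (Pb idag) x + γ ≤ M x)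
    (hcond : ε < (p * γ / (2 ^ (α + 1) * c₀)) ^ (1 / (α + 1))) :
    Finset.univ.sup' (Finset.univ_nonempty_iff.mpr ⟨⟨0, hN⟩⟩)
        (fun i => ∫ x, μ (Pb i) x ∂ρ)
      < ∫ x, μ (Phat x) x ∂ρ := by
  set A : Set 𝒳 := {x | g x ≤ 2 * ε}
  have hsel : ∀ x, M x - A.indicator (fun _ => 2 * ε) x ≤ μ (Phat x) x := by
    intro x
    rw [hM x]
    by_cases hx : x ∈ A
    · rw [Set.indicator_of_mem hx]
      exact (C x).sup'_sub_two_mul_le_of_abs_sub_le _ (hPhatMem x) (hPhatMax x) (herr x)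
    · rw [Set.indicator_of_notMem hx, sub_zero]
      exact ((hg x).eq_sup'_of_abs_sub_le (not_le.mp hx) _ (hPhatMem x) (hPhatMax x) (herr x)).ge
  have hbase : ∀ x, μ (Pb idag) x + S.indicator (fun _ => γ) x ≤ M x := by
    intro x
    by_cases hx : x ∈ S
    · rw [Set.indicator_of_mem hx]
      exact hmargin x hx
    · rw [Set.indicator_of_notMem hx, add_zero, hM x]
      exact Finset.le_sup' (fun P => μ P x) (hbmem x idag)
  have hint := integral_add_indicator_sub_indicator_le (ρ := ρ)
    (.of_mem_Icc 0 1 hmPhat.aemeasurable (ae_of_all _ fun x => hμ _ x))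
    (.of_mem_Icc 0 1 (hmb idag).aemeasurable (ae_of_all _ fun x => hμ _ x))
    hS (measurableSet_le hmg measurable_const) fun x => by linarith [hsel x, hbase x]
  have hpS : p ≤ ρ.real S := (ENNReal.ofReal_le_iff_le_toReal (measure_ne_top ρ S)).mp hρS
  have hρA : ρ.real A ≤ c₀ * (2 * ε) ^ α :=
    ENNReal.toReal_le_of_le_ofReal (mul_nonneg hc₀.le (Real.rpow_nonneg (by linarith) _))
      (htsy _ ⟨by linarith, hε1⟩)
  have hsmall := two_mul_mul_mul_rpow_lt hε hc₀ (by linarith) (mul_pos hp hγ) hcond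
  rw [Finset.sup'_lt_iff]
  intro i _
  linarith [hidag i, mul_le_mul_of_nonneg_right hpS hγ.le,
    mul_le_mul_of_nonneg_left hρA (by linarith : 0 ≤ 2 * ε)]
end
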